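/- arXiv:2309.13200 — 5 statements merged into one kernel-verified Lean document; each statement's English description precedes it below -/
import Mathlib

section
/- Let H be a real Hilbert space and f : H → ℝ ∪ {+∞} proper, lower semicontinuous and convex with argmin f nonempty. Then prox_{γ f}(0) converges strongly to x*, the minimum norm element of argmin f, as γ → +∞. -/
/-!
Write `p γ = prox_{γ f}(0)`. Comparing the prox objective at `p γ` with its value at the midpoint
of `p γ` and `x` (convexity and the parallelogram law) gives
`‖x - p γ‖² ≤ 4γ (f x - f (p γ)) + 2 (‖x‖² - ‖p γ‖²)`.
For `x = p γ'` with `γ < γ'` this yields `‖p γ' - p γ‖² ≤ 2 (‖p γ'‖² - ‖p γ‖²)`, and for `x = x*`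
it yields `‖x* - p γ‖² ≤ 2 (‖x*‖² - ‖p γ‖²)`. So `γ ↦ ‖p γ‖²` is nondecreasing and bounded, and
the path is Cauchy. Its limit `z` minimizes `f` by lower semicontinuity, so `‖x*‖ ≤ ‖z‖`, and the
second estimate in the limit forces `z = x*`.
-/

open Filter Topology

theorem LowerSemicontinuousAt.le_of_tendsto_of_eventually_le {α ι γ : Type*} [TopologicalSpace α]
    [LinearOrder γ] [DenselyOrdered γ] [TopologicalSpace γ] [OrderTopology γ]
    {f : α → γ} {z : α} (hf : LowerSemicontinuousAt f z) {l : Filter ι} [l.NeBot]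
    {u : ι → α} {v : ι → γ} {b : γ} (hu : Tendsto u l (𝓝 z)) (hv : Tendsto v l (𝓝 b))
    (huv : ∀ᶠ i in l, f (u i) ≤ v i) : f z ≤ b := by
  by_contra! hlt
  obtain ⟨c, hbc, hcz⟩ := exists_between hlt
  obtain ⟨i, hci, hvi, hi⟩ :=
    ((hu.eventually (hf c hcz)).and ((hv.eventually (gt_mem_nhds hbc)).and huv)).exists
  exact (hci.trans_le hi).not_gt hvi

theorem cauchySeq_of_dist_sq_le_sub {ι α : Type*} [SemilatticeSup ι] [Nonempty ι]
    [PseudoMetricSpace α] {u : ι → α} {N : ι → ℝ} {a₀ : ι} {C : ℝ}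
    (hC : ∀ a, a₀ ≤ a → N a ≤ C)
    (h : ∀ a b, a₀ ≤ a → a < b → dist (u a) (u b) ^ 2 ≤ N b - N a) : CauchySeq u := by
  have hbdd : BddAbove (N '' Set.Ici a₀) := ⟨C, Set.forall_mem_image.2 hC⟩
  rw [Metric.cauchySeq_iff']
  intro ε hε
  obtain ⟨_, ⟨a, ha, rfl⟩, hNa⟩ := exists_lt_of_lt_csSup (Set.nonempty_Ici.image N)
    (sub_lt_self (sSup (N '' Set.Ici a₀)) (pow_pos hε 2))
  refine ⟨a, fun b hb => ?_⟩
  obtain rfl | hab := hb.eq_or_lt'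
  · simpa using hε
  have hNb : N b ≤ sSup (N '' Set.Ici a₀) := le_csSup hbdd ⟨b, le_trans ha hab.le, rfl⟩
  have hsq : dist (u a) (u b) ^ 2 < ε ^ 2 := by linarith [h a b ha hab]
  rw [dist_comm]
  exact lt_of_pow_lt_pow_left₀ 2 hε.le hsq

section

variable {H : Type*} [NormedAddCommGroup H]

/-- `p = prox_{γ f}(0)`. -/
def IsProxPoint (f : H → EReal) (γ : ℝ) (p : H) : Prop :=
  ∀ x, f p + ((‖p‖ ^ 2 / (2 * γ) : ℝ) : EReal) ≤ f x + ((‖x‖ ^ 2 / (2 * γ) : ℝ) : EReal)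

namespace IsProxPoint

variable {f : H → EReal} {γ : ℝ} {p : H}

theorem apply_le (hp : IsProxPoint f γ p) (hγ : 0 ≤ γ) (x : H) :
    f p ≤ f x + ((‖x‖ ^ 2 / (2 * γ) : ℝ) : EReal) :=
  (le_add_of_nonneg_right (EReal.coe_nonneg.2 (by positivity))).trans (hp x)

theorem apply_ne_top (hp : IsProxPoint f γ p) {x : H} (hx : f x ≠ ⊤) : f p ≠ ⊤ := by
  intro hp_top
  have h := hp x
  rw [hp_top, EReal.top_add_coe, top_le_iff] at h
  exact EReal.add_lt_top hx (EReal.coe_ne_top _) |>.ne h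

variable [InnerProductSpace ℝ H]

theorem sq_norm_sub_le
    (hconv : ∀ x y : H, ∀ a b : ℝ, 0 ≤ a → 0 ≤ b → a + b = 1 →
      f (a • x + b • y) ≤ (a : EReal) * f x + (b : EReal) * f y)
    (hγ : 0 < γ) (hp : IsProxPoint f γ p) {x : H} {a b : ℝ} (ha : f p = a) (hb : f x = b) :
    ‖x - p‖ ^ 2 ≤ 4 * γ * (b - a) + 2 * (‖x‖ ^ 2 - ‖p‖ ^ 2) := by
  set m : H := (1 / 2 : ℝ) • p + (1 / 2 : ℝ) • x
  have hm_norm : 4 * ‖m‖ ^ 2 = 2 * (‖p‖ ^ 2 + ‖x‖ ^ 2) - ‖x - p‖ ^ 2 := by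
    have hm : m = (1 / 2 : ℝ) • (p + x) := (smul_add _ _ _).symm
    rw [hm, norm_smul, Real.norm_of_nonneg (by norm_num), norm_sub_rev]
    nlinarith [parallelogram_law_with_norm ℝ p x]
  have hfm : f m ≤ ((1 / 2 * a + 1 / 2 * b : ℝ) : EReal) := by
    have := hconv p x (1 / 2) (1 / 2) (by norm_num) (by norm_num) (by norm_num)
    rw [ha, hb] at this
    exact_mod_cast this
  have hmin : 2 * γ * a + ‖p‖ ^ 2 ≤ γ * (a + b) + ‖m‖ ^ 2 := by
    have h := (hp m).trans (add_le_add hfm le_rfl)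
    rw [ha] at h
    have h' : a + ‖p‖ ^ 2 / (2 * γ) ≤ 1 / 2 * a + 1 / 2 * b + ‖m‖ ^ 2 / (2 * γ) := by
      exact_mod_cast h
    field_simp at h'
    linarith
  linarith

theorem sq_norm_sub_le_of_apply_le
    (hconv : ∀ x y : H, ∀ a b : ℝ, 0 ≤ a → 0 ≤ b → a + b = 1 →
      f (a • x + b • y) ≤ (a : EReal) * f x + (b : EReal) * f y)
    (hbot : ∀ x, f x ≠ ⊥) (hγ : 0 < γ) (hp : IsProxPoint f γ p) {x : H} (hx : f x ≠ ⊤)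
    (hxp : f x ≤ f p) : ‖x - p‖ ^ 2 ≤ 2 * (‖x‖ ^ 2 - ‖p‖ ^ 2) := by
  lift f p to ℝ using ⟨hp.apply_ne_top hx, hbot p⟩ with a ha
  lift f x to ℝ using ⟨hx, hbot x⟩ with b hb
  have := sq_norm_sub_le hconv hγ hp ha.symm hb.symm
  nlinarith [EReal.coe_le_coe_iff.1 hxp]

theorem sq_norm_sub_le_of_lt
    (hconv : ∀ x y : H, ∀ a b : ℝ, 0 ≤ a → 0 ≤ b → a + b = 1 →
      f (a • x + b • y) ≤ (a : EReal) * f x + (b : EReal) * f y)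
    (hbot : ∀ x, f x ≠ ⊥) {γ' : ℝ} {q : H} (hγ : 0 < γ) (hγγ' : γ < γ')
    (hp : IsProxPoint f γ p) (hq : IsProxPoint f γ' q) (hp_top : f p ≠ ⊤) :
    ‖q - p‖ ^ 2 ≤ 2 * (‖q‖ ^ 2 - ‖p‖ ^ 2) := by
  lift f q to ℝ using ⟨hq.apply_ne_top hp_top, hbot q⟩ with b hb
  lift f p to ℝ using ⟨hp_top, hbot p⟩ with a ha
  have hpq := sq_norm_sub_le hconv hγ hp ha.symm hb.symm
  have hqp := sq_norm_sub_le hconv (hγ.trans hγγ') hq hb.symm ha.symm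
  -- the sum of the two estimates gives `0 ≤ 4 * (γ' - γ) * (a - b)`
  have hba : b ≤ a := by nlinarith [sq_nonneg ‖q - p‖, sq_nonneg ‖p - q‖]
  nlinarith

end IsProxPoint

theorem apply_le_of_tendsto_isProxPoint {f : H → EReal} (hf : LowerSemicontinuous f)
    {y : ℝ → H} (hy : ∀ γ : ℝ, 0 < γ → IsProxPoint f γ (y γ)) {z : H}
    (hz : Tendsto y atTop (𝓝 z)) (x : H) : f z ≤ f x := by
  have hpen : Tendsto (fun γ : ℝ => ((‖x‖ ^ 2 / (2 * γ) : ℝ) : EReal)) atTop (𝓝 0) := by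
    have : Tendsto (fun γ : ℝ => ‖x‖ ^ 2 / (2 * γ)) atTop (𝓝 0) :=
      tendsto_const_nhds.div_atTop (tendsto_id.const_mul_atTop two_pos)
    exact (continuous_coe_real_ereal.tendsto' 0 0 EReal.coe_zero).comp this
  have hv : Tendsto (fun γ : ℝ => f x + ((‖x‖ ^ 2 / (2 * γ) : ℝ) : EReal)) atTop (𝓝 (f x)) := by
    have h := (EReal.continuousAt_add (p := (f x, 0)) (Or.inr EReal.zero_ne_bot)
      (Or.inr EReal.zero_ne_top)).tendsto.comp (tendsto_const_nhds.prodMk_nhds hpen)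
    simpa [Function.comp_def] using h
  exact (hf.lowerSemicontinuousAt z).le_of_tendsto_of_eventually_le hz hv
    ((eventually_gt_atTop 0).mono fun γ hγ => (hy γ hγ).apply_le hγ.le x)

end

/-- For a proper lsc convex `f : H → ℝ ∪ {+∞}` with nonempty argmin,
`prox_{γ f}(0)` converges strongly, as `γ → +∞`, to the minimum norm element of `argmin f`. -/
theorem stmt_1 {H : Type*} [NormedAddCommGroup H] [InnerProductSpace ℝ H] [CompleteSpace H]
    (f : H → EReal)
    (hbot : ∀ x, f x ≠ ⊥) (htop : ∃ x, f x ≠ ⊤)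
    (hlsc : LowerSemicontinuous f)
    (hconv : ∀ x y : H, ∀ a b : ℝ, 0 ≤ a → 0 ≤ b → a + b = 1 →
      f (a • x + b • y) ≤ (a : EReal) * f x + (b : EReal) * f y)
    (y : ℝ → H)
    (hy : ∀ γ : ℝ, 0 < γ → ∀ x : H,
      f (y γ) + ((‖y γ‖ ^ 2 / (2 * γ) : ℝ) : EReal)
        ≤ f x + ((‖x‖ ^ 2 / (2 * γ) : ℝ) : EReal))
    (xstar : H)
    (hxs_min : ∀ x, f xstar ≤ f x)
    (hxs_norm : ∀ z : H, (∀ x, f z ≤ f x) → ‖xstar‖ ≤ ‖z‖) :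
    Filter.Tendsto y Filter.atTop (nhds xstar) := by
  have hprox : ∀ γ : ℝ, 0 < γ → IsProxPoint f γ (y γ) := hy
  obtain ⟨x₀, hx₀⟩ := htop
  have hxs_top : f xstar ≠ ⊤ := ne_top_of_le_ne_top hx₀ (hxs_min x₀)
  have hstar (γ : ℝ) (hγ : 0 < γ) : ‖xstar - y γ‖ ^ 2 ≤ 2 * (‖xstar‖ ^ 2 - ‖y γ‖ ^ 2) :=
    (hprox γ hγ).sq_norm_sub_le_of_apply_le hconv hbot hγ hxs_top (hxs_min _)
  have hcauchy : CauchySeq y := by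
    refine cauchySeq_of_dist_sq_le_sub (N := fun γ => 2 * ‖y γ‖ ^ 2) (a₀ := 1)
      (C := 2 * ‖xstar‖ ^ 2) (fun γ hγ => ?_) (fun γ γ' hγ hγγ' => ?_)
    · nlinarith [hstar γ (by linarith), sq_nonneg ‖xstar - y γ‖]
    · have hγ₀ : 0 < γ := by linarith
      rw [dist_comm, dist_eq_norm]
      linarith [(hprox γ hγ₀).sq_norm_sub_le_of_lt hconv hbot hγ₀ hγγ' (hprox γ' (by linarith))
        ((hprox γ hγ₀).apply_ne_top hxs_top)]
  obtain ⟨z, hz⟩ := cauchySeq_tendsto_of_complete hcauchy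
  have hz_min : ∀ x, f z ≤ f x := apply_le_of_tendsto_isProxPoint hlsc hprox hz
  have hz_star : ‖xstar - z‖ ^ 2 ≤ 2 * (‖xstar‖ ^ 2 - ‖z‖ ^ 2) :=
    le_of_tendsto_of_tendsto ((tendsto_const_nhds.sub hz).norm.pow 2)
      ((tendsto_const_nhds.sub (hz.norm.pow 2)).const_mul 2)
      ((eventually_gt_atTop 0).mono hstar)
  have hz_norm : ‖xstar‖ ^ 2 ≤ ‖z‖ ^ 2 := pow_le_pow_left₀ (norm_nonneg _) (hxs_norm z hz_min) 2
  have hz_eq : xstar = z := by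
    rw [← sub_eq_zero, ← norm_eq_zero, ← sq_eq_zero_iff]
    linarith [sq_nonneg ‖xstar - z‖]
  exact hz_eq ▸ hz
end

section
/- Let f : H → ℝ ∪ {+∞} be proper lsc convex, d ∈ (0,1), and for β > 0 set y_β = prox_{(β/(1−d)) f}(0). If 0 < β ≤ β', then ‖y_{β'} − y_β‖² ≤ ((β' − β)/β') ⟨y_{β'}, y_{β'} − y_β⟩, and consequently ‖y_{β'} − y_β‖ ≤ ((β' − β)/β') ‖y_{β'}‖. -/
/-!
Comparing the minimality of `y` with the points `(1 - t) • y + t • z` of the segment towards `z`,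
dividing by `t` and letting `t → 0⁺` shows that `-2k y` is a subgradient of `f` at a minimizer `y`
of `f + k‖·‖²`. Monotonicity of `∂f` for `y_β` and `y_{β'}` then gives
`⟪y_{β'}, y_{β'} - y_β⟫ / β' ≤ ⟪y_β, y_{β'} - y_β⟫ / β`, which is the first inequality once
`y_β = y_{β'} - (y_{β'} - y_β)` is substituted; Cauchy–Schwarz turns it into the second.
-/

open Filter Topology Set
open scoped RealInnerProductSpace

theorem le_of_forall_mem_Ioo_le_add_mul {a b c : ℝ} (h : ∀ t ∈ Ioo (0 : ℝ) 1, a ≤ b + t * c) :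
    a ≤ b := by
  have hlim : Tendsto (fun t : ℝ => b + t * c) (𝓝[>] 0) (𝓝 b) := by
    have : Tendsto (fun t : ℝ => b + t * c) (𝓝 0) (𝓝 (b + 0 * c)) :=
      tendsto_const_nhds.add (tendsto_id.mul_const c)
    simpa using this.mono_left nhdsWithin_le_nhds
  exact ge_of_tendsto hlim (eventually_of_mem (Ioo_mem_nhdsGT one_pos) h)

theorem EReal.ne_top_of_add_coe_le_add_coe {x y : EReal} {r s : ℝ} (h : x + r ≤ y + s)
    (hy : y ≠ ⊤) : x ≠ ⊤ := by
  rintro rfl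
  rw [EReal.top_add_coe, top_le_iff] at h
  exact EReal.add_ne_top hy (EReal.coe_ne_top s) h

theorem norm_le_mul_norm_of_sq_le_mul_inner {H : Type*} [NormedAddCommGroup H]
    [InnerProductSpace ℝ H] {x v : H} {r : ℝ} (hr : 0 ≤ r) (h : ‖x‖ ^ 2 ≤ r * ⟪v, x⟫) :
    ‖x‖ ≤ r * ‖v‖ := by
  have hcs : ‖x‖ ^ 2 ≤ r * ‖v‖ * ‖x‖ := by
    nlinarith [mul_le_mul_of_nonneg_left (real_inner_le_norm v x) hr]
  nlinarith [norm_nonneg x, mul_nonneg hr (norm_nonneg v)]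

section ConvexEReal

variable {H : Type*} [NormedAddCommGroup H] [InnerProductSpace ℝ H] {f : H → EReal}

theorem add_two_mul_inner_le_of_isMin_add_sq
    (hconv : ∀ x y : H, ∀ a b : ℝ, 0 ≤ a → 0 ≤ b → a + b = 1 →
      f (a • x + b • y) ≤ (a : EReal) * f x + (b : EReal) * f y)
    {k : ℝ} {y z : H} {a c : ℝ}
    (hmin : ∀ w : H, f y + ((k * ‖y‖ ^ 2 : ℝ) : EReal) ≤ f w + ((k * ‖w‖ ^ 2 : ℝ) : EReal))
    (hy : f y = a) (hz : f z = c) :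
    a + 2 * k * ⟪y, y - z⟫ ≤ c := by
  refine le_of_forall_mem_Ioo_le_add_mul (c := k * ‖z - y‖ ^ 2) fun t ⟨ht0, ht1⟩ => ?_
  set w := (1 - t) • y + t • z with hw
  have hfw : f w ≤ ((1 - t) * a + t * c : ℝ) := by
    have := hconv y z (1 - t) t (by linarith) ht0.le (by ring)
    rwa [hy, hz, ← EReal.coe_mul, ← EReal.coe_mul, ← EReal.coe_add] at this
  have hkey : a + k * ‖y‖ ^ 2 ≤ (1 - t) * a + t * c + k * ‖w‖ ^ 2 := by
    have := (hmin w).trans (add_le_add_left hfw _)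
    rw [hy] at this
    exact_mod_cast this
  have hnorm : ‖w‖ ^ 2 = ‖y‖ ^ 2 - 2 * t * ⟪y, y - z⟫ + t ^ 2 * ‖z - y‖ ^ 2 := by
    have : w = y - t • (y - z) := by rw [hw]; module
    rw [this, norm_sub_sq_real, norm_smul, real_inner_smul_right, mul_pow, Real.norm_eq_abs,
      sq_abs, norm_sub_rev]
    ring
  have : t * (a + 2 * k * ⟪y, y - z⟫) ≤ t * (c + t * (k * ‖z - y‖ ^ 2)) := by
    rw [hnorm] at hkey
    linarith
  exact le_of_mul_le_mul_left this ht0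

theorem inner_le_of_isMin_add_sq (hbot : ∀ x, f x ≠ ⊥) (htop : ∃ x, f x ≠ ⊤)
    (hconv : ∀ x y : H, ∀ a b : ℝ, 0 ≤ a → 0 ≤ b → a + b = 1 →
      f (a • x + b • y) ≤ (a : EReal) * f x + (b : EReal) * f y)
    {k₁ k₂ : ℝ} {y₁ y₂ : H}
    (hy₁ : ∀ w : H, f y₁ + ((k₁ * ‖y₁‖ ^ 2 : ℝ) : EReal) ≤ f w + ((k₁ * ‖w‖ ^ 2 : ℝ) : EReal))
    (hy₂ : ∀ w : H, f y₂ + ((k₂ * ‖y₂‖ ^ 2 : ℝ) : EReal) ≤ f w + ((k₂ * ‖w‖ ^ 2 : ℝ) : EReal)) :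
    k₂ * ⟪y₂, y₂ - y₁⟫ ≤ k₁ * ⟪y₁, y₂ - y₁⟫ := by
  obtain ⟨x, hx⟩ := htop
  have ha₁ := EReal.coe_toReal (EReal.ne_top_of_add_coe_le_add_coe (hy₁ x) hx) (hbot y₁)
  have ha₂ := EReal.coe_toReal (EReal.ne_top_of_add_coe_le_add_coe (hy₂ x) hx) (hbot y₂)
  have h₁ := add_two_mul_inner_le_of_isMin_add_sq hconv hy₁ ha₁.symm ha₂.symm
  have h₂ := add_two_mul_inner_le_of_isMin_add_sq hconv hy₂ ha₂.symm ha₁.symm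
  rw [← neg_sub, inner_neg_right] at h₁
  linarith

end ConvexEReal

theorem stmt_7_general {H : Type*} [NormedAddCommGroup H] [InnerProductSpace ℝ H]
    (f : H → EReal)
    (hbot : ∀ x, f x ≠ ⊥) (htop : ∃ x, f x ≠ ⊤)
    (hconv : ∀ x y : H, ∀ a b : ℝ, 0 ≤ a → 0 ≤ b → a + b = 1 →
      f (a • x + b • y) ≤ (a : EReal) * f x + (b : EReal) * f y)
    (d : ℝ) (hd1 : d < 1)
    (β β' : ℝ) (hβ : 0 < β) (hββ' : β ≤ β')
    (yβ yβ' : H)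
    (hyβ : ∀ z : H, f yβ + (((1 - d) / (2 * β) * ‖yβ‖ ^ 2 : ℝ) : EReal)
        ≤ f z + (((1 - d) / (2 * β) * ‖z‖ ^ 2 : ℝ) : EReal))
    (hyβ' : ∀ z : H, f yβ' + (((1 - d) / (2 * β') * ‖yβ'‖ ^ 2 : ℝ) : EReal)
        ≤ f z + (((1 - d) / (2 * β') * ‖z‖ ^ 2 : ℝ) : EReal)) :
    ‖yβ' - yβ‖ ^ 2 ≤ (β' - β) / β' * (inner ℝ yβ' (yβ' - yβ) : ℝ)
      ∧ ‖yβ' - yβ‖ ≤ (β' - β) / β' * ‖yβ'‖ := by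
  have hβ' : 0 < β' := hβ.trans_le hββ'
  have hmono := inner_le_of_isMin_add_sq hbot htop hconv hyβ hyβ'
  have hsplit : ⟪yβ, yβ' - yβ⟫ = ⟪yβ', yβ' - yβ⟫ - ‖yβ' - yβ‖ ^ 2 := by
    rw [← real_inner_self_eq_norm_sq, ← inner_sub_left, sub_sub_cancel]
  rw [hsplit, div_mul_eq_mul_div, div_mul_eq_mul_div,
    div_le_div_iff₀ (by positivity) (by positivity)] at hmono
  have hsq : ‖yβ' - yβ‖ ^ 2 ≤ (β' - β) / β' * ⟪yβ', yβ' - yβ⟫ := by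
    rw [div_mul_eq_mul_div, le_div_iff₀ hβ']
    have hscaled : β * ⟪yβ', yβ' - yβ⟫ ≤ β' * (⟪yβ', yβ' - yβ⟫ - ‖yβ' - yβ‖ ^ 2) :=
      le_of_mul_le_mul_left (by linarith) (by linarith : 0 < 2 * (1 - d))
    linarith
  exact ⟨hsq, norm_le_mul_norm_of_sq_le_mul_inner (div_nonneg (sub_nonneg.2 hββ') hβ'.le) hsq⟩

/-- With `y_β = prox_{(β/(1−d)) f}(0)` (the unique minimizer of
`f + ((1−d)/(2β))‖·‖²`), if `0 < β ≤ β'`, then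
`‖y_{β'} − y_β‖² ≤ ((β' − β)/β') ⟨y_{β'}, y_{β'} − y_β⟩` and consequently
`‖y_{β'} − y_β‖ ≤ ((β' − β)/β') ‖y_{β'}‖`. -/
theorem stmt_7 {H : Type*} [NormedAddCommGroup H] [InnerProductSpace ℝ H] [CompleteSpace H]
    (f : H → EReal)
    (hbot : ∀ x, f x ≠ ⊥) (htop : ∃ x, f x ≠ ⊤)
    (hlsc : LowerSemicontinuous f)
    (hconv : ∀ x y : H, ∀ a b : ℝ, 0 ≤ a → 0 ≤ b → a + b = 1 →
      f (a • x + b • y) ≤ (a : EReal) * f x + (b : EReal) * f y)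
    (d : ℝ) (hd0 : 0 < d) (hd1 : d < 1)
    (β β' : ℝ) (hβ : 0 < β) (hββ' : β ≤ β')
    (yβ yβ' : H)
    (hyβ : ∀ z : H, f yβ + (((1 - d) / (2 * β) * ‖yβ‖ ^ 2 : ℝ) : EReal)
        ≤ f z + (((1 - d) / (2 * β) * ‖z‖ ^ 2 : ℝ) : EReal))
    (hyβ' : ∀ z : H, f yβ' + (((1 - d) / (2 * β') * ‖yβ'‖ ^ 2 : ℝ) : EReal)
        ≤ f z + (((1 - d) / (2 * β') * ‖z‖ ^ 2 : ℝ) : EReal)) :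
    ‖yβ' - yβ‖ ^ 2 ≤ (β' - β) / β' * (inner ℝ yβ' (yβ' - yβ) : ℝ)
      ∧ ‖yβ' - yβ‖ ≤ (β' - β) / β' * ‖yβ'‖ :=
  stmt_7_general f hbot htop hconv d hd1 β β' hβ hββ' yβ yβ' hyβ hyβ'
end

section
/- Let f : H → ℝ ∪ {+∞} be proper lsc convex with argmin f nonempty, d ∈ (0,1), and (β_k) a positive nondecreasing sequence with β_k → +∞. Define the proximal iterates x_{k+1} = prox_{β_k f}(d x_k) and y_k = prox_{(β_k/(1−d)) f}(0). Define E_k = β_k (φ_k(x_k) − φ_k(y_k)) + (λ/2)‖x_k − y_{k−1}‖² with φ_k = f + ((1−d)/(2β_k))‖·‖² and λ > 0. If E_k → 0 as k → ∞, then x_k converges strongly to x*, the minimum norm element of argmin f. -/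
/-!
The first term of `E_k` is nonnegative because `y_k` minimizes `φ_k`, so `E_k → 0` forces
`‖x_k - y_{k-1}‖ → 0`, and it remains to see that the Tikhonov path `y_k` converges strongly
to `x*`. Strong convexity of `φ_k` gives `‖y_k - y_j‖² ≤ 2 (‖y_k‖² - ‖y_j‖²)` for `j ≤ k`, while
`‖y_k‖ ≤ ‖x*‖`; hence `‖y_k‖²` increases to a limit and `(y_k)` is Cauchy. Its limit minimizes `f`
by lower semicontinuity and has norm at most `‖x*‖`, so it is `x*`: by strict convexity of the
norm, a convex function has at most one minimizer of minimal norm.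
-/

open Filter Topology

theorem LowerSemicontinuous.le_of_tendsto_of_le {α β ι : Type*} [TopologicalSpace α]
    [TopologicalSpace β] [LinearOrder β] [OrderTopology β] [DenselyOrdered β]
    {f : α → β} (hf : LowerSemicontinuous f) {l : Filter ι} [l.NeBot] {u : ι → α} {g : ι → β}
    {x : α} {b : β} (hu : Tendsto u l (𝓝 x)) (hfg : ∀ i, f (u i) ≤ g i)
    (hg : Tendsto g l (𝓝 b)) : f x ≤ b := by
  by_contra! hbx
  obtain ⟨m, hbm, hmx⟩ := exists_between hbx
  obtain ⟨i, hmf, hgm⟩ :=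
    ((hu.eventually (hf x m hmx)).and (hg.eventually (gt_mem_nhds hbm))).exists
  exact (hmf.trans_le (hfg i)).not_gt hgm

theorem tendsto_zero_of_add_coe_tendsto_zero {ι : Type*} {l : Filter ι} {A : ι → EReal}
    {r : ι → ℝ} (hA : ∀ i, 0 ≤ A i) (hr : ∀ i, 0 ≤ r i)
    (h : Tendsto (fun i => A i + (r i : EReal)) l (𝓝 0)) : Tendsto r l (𝓝 0) := by
  have hr' : Tendsto (fun i => (r i : EReal)) l (𝓝 0) :=
    tendsto_of_tendsto_of_tendsto_of_le_of_le tendsto_const_nhds h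
      (fun i => EReal.coe_nonneg.2 (hr i)) (fun i => le_add_of_nonneg_left (hA i))
  rw [← EReal.coe_zero] at hr'
  exact EReal.tendsto_coe.1 hr'

theorem tendsto_zero_of_const_mul_norm_sq {ι E : Type*} [NormedAddCommGroup E] {l : Filter ι}
    {v : ι → E} {r : ℝ} (hr : 0 < r) (h : Tendsto (fun i => r * ‖v i‖ ^ 2) l (𝓝 0)) :
    Tendsto v l (𝓝 0) := by
  rw [tendsto_zero_iff_norm_tendsto_zero]
  have h' := (h.const_mul r⁻¹).sqrt
  rw [mul_zero, Real.sqrt_zero] at h'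
  refine h'.congr fun i => ?_
  rw [← mul_assoc, inv_mul_cancel₀ hr.ne', one_mul, Real.sqrt_sq (norm_nonneg _)]

section Convex

variable {E : Type*} [AddCommGroup E] [Module ℝ E] {f : E → EReal}

-- `EReal` is not an `ℝ`-module, so Mathlib's `ConvexOn` does not apply.
def IsConvexEReal (f : E → EReal) : Prop :=
  ∀ x y : E, ∀ a b : ℝ, 0 ≤ a → 0 ≤ b → a + b = 1 →
    f (a • x + b • y) ≤ (a : EReal) * f x + (b : EReal) * f y

theorem IsConvexEReal.midpoint_le (hf : IsConvexEReal f) (x y : E) :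
    f ((1 / 2 : ℝ) • (x + y)) ≤ ((1 / 2 : ℝ) : EReal) * f x + ((1 / 2 : ℝ) : EReal) * f y := by
  rw [smul_add]
  exact hf x y _ _ (by norm_num) (by norm_num) (by norm_num)

theorem IsConvexEReal.isMin_midpoint (hf : IsConvexEReal f) {x y : E} (hx : ∀ w, f x ≤ f w)
    (hy : ∀ w, f y ≤ f w) (w : E) : f ((1 / 2 : ℝ) • (x + y)) ≤ f w := by
  have hyx : f y = f x := le_antisymm (hy x) (hx y)
  calc f ((1 / 2 : ℝ) • (x + y))
      ≤ ((1 / 2 : ℝ) : EReal) * f x + ((1 / 2 : ℝ) : EReal) * f x := hyx ▸ hf.midpoint_le x y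
    _ = f x := by
      rw [← EReal.right_distrib_of_nonneg (by norm_num) (by norm_num), ← EReal.coe_add]
      norm_num
    _ ≤ f w := hx w

end Convex

theorem IsConvexEReal.eq_of_norm_le {E : Type*} [NormedAddCommGroup E] [NormedSpace ℝ E]
    [StrictConvexSpace ℝ E] {f : E → EReal} (hf : IsConvexEReal f) {x₀ z : E}
    (hx₀ : ∀ w, f x₀ ≤ f w) (hx₀_norm : ∀ v : E, (∀ w, f v ≤ f w) → ‖x₀‖ ≤ ‖v‖)
    (hz : ∀ w, f z ≤ f w) (hzx : ‖z‖ ≤ ‖x₀‖) : z = x₀ := by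
  by_contra hne
  have hnorm : ‖z‖ = ‖x₀‖ := le_antisymm hzx (hx₀_norm z hz)
  have hlt := (norm_midpoint_lt_iff hnorm).2 hne
  exact hlt.not_ge (hnorm ▸ hx₀_norm _ (hf.isMin_midpoint hz hx₀))

theorem norm_half_smul_add_sq {H : Type*} [NormedAddCommGroup H] [InnerProductSpace ℝ H]
    (y z : H) : ‖(1 / 2 : ℝ) • (y + z)‖ ^ 2 = (‖y‖ ^ 2 + ‖z‖ ^ 2) / 2 - ‖z - y‖ ^ 2 / 4 := by
  rw [norm_smul, mul_pow, norm_add_sq_real, norm_sub_sq_real, real_inner_comm]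
  norm_num
  ring

section Regularized

variable {H : Type*} [NormedAddCommGroup H] {f : H → EReal}

-- `y = prox_{f / (2c)}(0)`; in the theorem `c = (1 - d) / (2 β_k)`.
def IsRegularizedMin (f : H → EReal) (c : ℝ) (y : H) : Prop :=
  ∀ z, f y + ((c * ‖y‖ ^ 2 : ℝ) : EReal) ≤ f z + ((c * ‖z‖ ^ 2 : ℝ) : EReal)

variable {c c' : ℝ} {y y' z : H}

theorem IsRegularizedMin.ne_top (h : IsRegularizedMin f c y) (hz : f z ≠ ⊤) : f y ≠ ⊤ := by
  intro hy
  have := h z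
  rw [hy, EReal.top_add_coe, top_le_iff] at this
  exact EReal.add_ne_top hz (EReal.coe_ne_top _) this

theorem IsRegularizedMin.sub_nonneg (h : IsRegularizedMin f c y) (hy_bot : f y ≠ ⊥)
    (hy_top : f y ≠ ⊤) (z : H) :
    0 ≤ (f z + ((c * ‖z‖ ^ 2 : ℝ) : EReal)) - (f y + ((c * ‖y‖ ^ 2 : ℝ) : EReal)) :=
  (EReal.sub_nonneg (Or.inr (EReal.add_ne_top hy_top (EReal.coe_ne_top _)))
    (Or.inr (EReal.add_ne_bot_iff.2 ⟨hy_bot, EReal.coe_ne_bot _⟩))).2 (h z)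

theorem IsRegularizedMin.le_of_eq_coe (h : IsRegularizedMin f c y) {a w : ℝ} (ha : f y = a)
    (hw : f z = w) : a + c * ‖y‖ ^ 2 ≤ w + c * ‖z‖ ^ 2 := by
  have := h z
  rw [ha, hw] at this
  exact_mod_cast this

theorem IsRegularizedMin.norm_le (h : IsRegularizedMin f c y) (hc : 0 < c)
    (hz : ∀ w, f z ≤ f w) {a w : ℝ} (ha : f y = a) (hw : f z = w) : ‖y‖ ≤ ‖z‖ := by
  have hwa : w ≤ a := by exact_mod_cast ha ▸ hw ▸ hz y
  have := h.le_of_eq_coe ha hw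
  have hsq : ‖y‖ ^ 2 ≤ ‖z‖ ^ 2 := le_of_mul_le_mul_left (by linarith) hc
  exact pow_le_pow_iff_left₀ (norm_nonneg _) (norm_nonneg _) two_ne_zero |>.1 hsq

variable [InnerProductSpace ℝ H]

-- Strong convexity of `f + c ‖·‖²`, obtained by comparing `y` with the midpoint of `y` and `z`.
theorem IsRegularizedMin.add_half_mul_sq_le (hf : IsConvexEReal f) (h : IsRegularizedMin f c y)
    {a w : ℝ} (ha : f y = a) (hw : f z = w) :
    a + c * ‖y‖ ^ 2 + c / 2 * ‖z - y‖ ^ 2 ≤ w + c * ‖z‖ ^ 2 := by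
  have hmid := hf.midpoint_le y z
  rw [ha, hw] at hmid
  have h' : ((a + c * ‖y‖ ^ 2 : ℝ) : EReal)
      ≤ ((1 / 2 * a + 1 / 2 * w + c * ‖(1 / 2 : ℝ) • (y + z)‖ ^ 2 : ℝ) : EReal) := by
    have := (h ((1 / 2 : ℝ) • (y + z))).trans (add_le_add hmid le_rfl)
    rw [ha] at this
    exact_mod_cast this
  rw [EReal.coe_le_coe_iff, norm_half_smul_add_sq] at h'
  linarith

theorem IsRegularizedMin.sq_norm_sub_le (hf : IsConvexEReal f) (h : IsRegularizedMin f c y)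
    (h' : IsRegularizedMin f c' y') (hc' : 0 < c') (hcc : c' ≤ c) {a a' : ℝ} (ha : f y = a)
    (ha' : f y' = a') : ‖y' - y‖ ^ 2 ≤ 2 * (‖y'‖ ^ 2 - ‖y‖ ^ 2) := by
  have hkey : c / 2 * ‖y' - y‖ ^ 2 ≤ (c - c') * (‖y'‖ ^ 2 - ‖y‖ ^ 2) := by
    linarith [h.add_half_mul_sq_le hf ha ha', h'.le_of_eq_coe ha' ha]
  rcases eq_or_ne y' y with rfl | hne
  · simp
  have hD : 0 < ‖y' - y‖ ^ 2 := pow_pos (norm_pos_iff.2 (sub_ne_zero.2 hne)) 2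
  have hN : 0 < ‖y'‖ ^ 2 - ‖y‖ ^ 2 := by
    by_contra! hN
    nlinarith [mul_nonpos_of_nonneg_of_nonpos (sub_nonneg_of_le hcc) hN]
  nlinarith [mul_pos hc' hN]

theorem cauchySeq_of_isRegularizedMin (hbot : ∀ x, f x ≠ ⊥) (hf : IsConvexEReal f)
    {c : ℕ → ℝ} (hc : ∀ k, 0 < c k) (hc_anti : Antitone c) {y : ℕ → H}
    (hy : ∀ k, IsRegularizedMin f (c k) (y k)) (hy_top : ∀ k, f (y k) ≠ ⊤) {R : ℝ}
    (hR : ∀ k, ‖y k‖ ≤ R) : CauchySeq y := by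
  have ha k : f (y k) = (f (y k)).toReal := (EReal.coe_toReal (hy_top k) (hbot _)).symm
  have hsq {j k : ℕ} (hjk : j ≤ k) : ‖y k - y j‖ ^ 2 ≤ 2 * (‖y k‖ ^ 2 - ‖y j‖ ^ 2) :=
    (hy j).sq_norm_sub_le hf (hy k) (hc k) (hc_anti hjk) (ha j) (ha k)
  have hmono : Monotone fun k => ‖y k‖ ^ 2 := fun j k hjk => by
    linarith [hsq hjk, sq_nonneg ‖y k - y j‖]
  have hbdd : BddAbove (Set.range fun k => ‖y k‖ ^ 2) := by
    refine ⟨R ^ 2, ?_⟩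
    rintro _ ⟨k, rfl⟩
    exact pow_le_pow_left₀ (norm_nonneg _) (hR k) 2
  have hL := tendsto_atTop_ciSup hmono hbdd
  set L := ⨆ k, ‖y k‖ ^ 2
  refine cauchySeq_of_le_tendsto_0' (fun j => √(2 * (L - ‖y j‖ ^ 2))) (fun j k hjk => ?_) ?_
  · rw [dist_comm, dist_eq_norm]
    apply Real.le_sqrt_of_sq_le
    linarith [hsq hjk, le_ciSup hbdd k]
  · simpa using ((hL.const_sub L).const_mul 2).sqrt

theorem tendsto_of_isRegularizedMin [CompleteSpace H] (hbot : ∀ x, f x ≠ ⊥)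
    (hlsc : LowerSemicontinuous f) (hf : IsConvexEReal f) {c : ℕ → ℝ} (hc : ∀ k, 0 < c k)
    (hc_anti : Antitone c) (hc0 : Tendsto c atTop (𝓝 0)) {y : ℕ → H}
    (hy : ∀ k, IsRegularizedMin f (c k) (y k)) {x₀ : H} (hx₀ : ∀ w, f x₀ ≤ f w)
    (hx₀_norm : ∀ v : H, (∀ w, f v ≤ f w) → ‖x₀‖ ≤ ‖v‖) (hx₀_top : f x₀ ≠ ⊤) :
    Tendsto y atTop (𝓝 x₀) := by
  have hy_top k : f (y k) ≠ ⊤ := (hy k).ne_top hx₀_top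
  have ha k : f (y k) = (f (y k)).toReal := (EReal.coe_toReal (hy_top k) (hbot _)).symm
  obtain ⟨F, hF⟩ : ∃ F : ℝ, f x₀ = F := ⟨_, (EReal.coe_toReal hx₀_top (hbot x₀)).symm⟩
  have hnorm k : ‖y k‖ ≤ ‖x₀‖ := (hy k).norm_le (hc k) hx₀ (ha k) hF
  obtain ⟨y₀, hy₀⟩ := cauchySeq_tendsto_of_complete
    (cauchySeq_of_isRegularizedMin hbot hf hc hc_anti hy hy_top hnorm)
  have hup k : f (y k) ≤ ((F + c k * ‖x₀‖ ^ 2 : ℝ) : EReal) := by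
    rw [ha k, EReal.coe_le_coe_iff]
    nlinarith [(hy k).le_of_eq_coe (ha k) hF, hc k, sq_nonneg ‖y k‖]
  have hlim : Tendsto (fun k => ((F + c k * ‖x₀‖ ^ 2 : ℝ) : EReal)) atTop (𝓝 (F : EReal)) :=
    EReal.tendsto_coe.2 (by simpa using (hc0.mul_const (‖x₀‖ ^ 2)).const_add F)
  have hy₀_min (w : H) : f y₀ ≤ f w :=
    (hlsc.le_of_tendsto_of_le hy₀ hup hlim).trans (hF ▸ hx₀ w)
  have hy₀_norm : ‖y₀‖ ≤ ‖x₀‖ := le_of_tendsto hy₀.norm (Eventually.of_forall hnorm)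
  rwa [← hf.eq_of_norm_le hx₀ hx₀_norm hy₀_min hy₀_norm]

end Regularized

theorem stmt_10_general {H : Type*} [NormedAddCommGroup H] [InnerProductSpace ℝ H] [CompleteSpace H]
    (f : H → EReal)
    (hbot : ∀ x, f x ≠ ⊥) (htop : ∃ x, f x ≠ ⊤)
    (hlsc : LowerSemicontinuous f)
    (hconv : ∀ x y : H, ∀ a b : ℝ, 0 ≤ a → 0 ≤ b → a + b = 1 →
      f (a • x + b • y) ≤ (a : EReal) * f x + (b : EReal) * f y)
    (d : ℝ) (hd1 : d < 1)
    (lam : ℝ) (hlam : 0 < lam)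
    (β : ℕ → ℝ) (hβpos : ∀ k, 0 < β k) (hβmono : Monotone β)
    (hβtop : Filter.Tendsto β Filter.atTop Filter.atTop)
    (x y : ℕ → H)
    -- `y_k = argmin φ_k = prox_{(β_k/(1−d)) f}(0)`
    (hy : ∀ k, ∀ z : H,
      f (y k) + (((1 - d) / (2 * β k) * ‖y k‖ ^ 2 : ℝ) : EReal)
        ≤ f z + (((1 - d) / (2 * β k) * ‖z‖ ^ 2 : ℝ) : EReal))
    (E : ℕ → EReal)
    (hE : ∀ k, E k
      = (β k : EReal) *
          ((f (x k) + (((1 - d) / (2 * β k) * ‖x k‖ ^ 2 : ℝ) : EReal))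
            - (f (y k) + (((1 - d) / (2 * β k) * ‖y k‖ ^ 2 : ℝ) : EReal)))
        + ((lam / 2 * ‖x k - y (k - 1)‖ ^ 2 : ℝ) : EReal))
    (hE0 : Filter.Tendsto E Filter.atTop (nhds (0 : EReal)))
    (xstar : H)
    (hxs_min : ∀ z, f xstar ≤ f z)
    (hxs_norm : ∀ z : H, (∀ w, f z ≤ f w) → ‖xstar‖ ≤ ‖z‖) :
    Filter.Tendsto x Filter.atTop (nhds xstar) := by
  set c : ℕ → ℝ := fun k => (1 - d) / (2 * β k)
  have hc k : 0 < c k := div_pos (by linarith) (by linarith [hβpos k])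
  have hc_anti : Antitone c := fun j k hjk =>
    div_le_div_of_nonneg_left (by linarith) (by linarith [hβpos j]) (by linarith [hβmono hjk])
  have hc0 : Tendsto c atTop (𝓝 0) := tendsto_const_nhds.div_atTop (hβtop.const_mul_atTop two_pos)
  have hxs_top : f xstar ≠ ⊤ := let ⟨z, hz⟩ := htop; ne_top_of_le_ne_top hz (hxs_min z)
  have hyx : Tendsto y atTop (𝓝 xstar) :=
    tendsto_of_isRegularizedMin hbot hlsc hconv hc hc_anti hc0 hy hxs_min hxs_norm hxs_top
  have hgap : Tendsto (fun k => lam / 2 * ‖x k - y (k - 1)‖ ^ 2) atTop (𝓝 0) := by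
    refine tendsto_zero_of_add_coe_tendsto_zero (fun k => ?_) (fun k => by positivity)
      (by rwa [funext hE] at hE0)
    exact mul_nonneg (EReal.coe_nonneg.2 (hβpos k).le)
      (IsRegularizedMin.sub_nonneg (hy k) (hbot _) (IsRegularizedMin.ne_top (hy k) hxs_top) (x k))
  simpa using (tendsto_zero_of_const_mul_norm_sq (half_pos hlam) hgap).add
    (hyx.comp (tendsto_sub_atTop_nat 1))

/-- For the proximal algorithm `x_{k+1} = prox_{β_k f}(d x_k)` with
`(β_k)` positive nondecreasing tending to `+∞`, `y_k = prox_{(β_k/(1−d)) f}(0)`,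
and energy `E_k = β_k(φ_k(x_k) − φ_k(y_k)) + (λ/2)‖x_k − y_{k−1}‖²`
(`φ_k = f + ((1−d)/(2β_k))‖·‖²`): if `E_k → 0` then `x_k → x*` strongly, where `x*` is
the minimum norm element of `argmin f`. -/
theorem stmt_10 {H : Type*} [NormedAddCommGroup H] [InnerProductSpace ℝ H] [CompleteSpace H]
    (f : H → EReal)
    (hbot : ∀ x, f x ≠ ⊥) (htop : ∃ x, f x ≠ ⊤)
    (hlsc : LowerSemicontinuous f)
    (hconv : ∀ x y : H, ∀ a b : ℝ, 0 ≤ a → 0 ≤ b → a + b = 1 →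
      f (a • x + b • y) ≤ (a : EReal) * f x + (b : EReal) * f y)
    (d : ℝ) (hd0 : 0 < d) (hd1 : d < 1)
    (lam : ℝ) (hlam : 0 < lam)
    (β : ℕ → ℝ) (hβpos : ∀ k, 0 < β k) (hβmono : Monotone β)
    (hβtop : Filter.Tendsto β Filter.atTop Filter.atTop)
    (x y : ℕ → H)
    -- `x_{k+1} = prox_{β_k f}(d x_k)`
    (hstep : ∀ k, ∀ z : H,
      f (x (k + 1)) + ((‖d • x k - x (k + 1)‖ ^ 2 / (2 * β k) : ℝ) : EReal)
        ≤ f z + ((‖d • x k - z‖ ^ 2 / (2 * β k) : ℝ) : EReal))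
    -- `y_k = argmin φ_k = prox_{(β_k/(1−d)) f}(0)`
    (hy : ∀ k, ∀ z : H,
      f (y k) + (((1 - d) / (2 * β k) * ‖y k‖ ^ 2 : ℝ) : EReal)
        ≤ f z + (((1 - d) / (2 * β k) * ‖z‖ ^ 2 : ℝ) : EReal))
    (E : ℕ → EReal)
    (hE : ∀ k, E k
      = (β k : EReal) *
          ((f (x k) + (((1 - d) / (2 * β k) * ‖x k‖ ^ 2 : ℝ) : EReal))
            - (f (y k) + (((1 - d) / (2 * β k) * ‖y k‖ ^ 2 : ℝ) : EReal)))
        + ((lam / 2 * ‖x k - y (k - 1)‖ ^ 2 : ℝ) : EReal))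
    (hE0 : Filter.Tendsto E Filter.atTop (nhds (0 : EReal)))
    (xstar : H)
    (hxs_min : ∀ z, f xstar ≤ f z)
    (hxs_norm : ∀ z : H, (∀ w, f z ≤ f w) → ‖xstar‖ ≤ ‖z‖) :
    Filter.Tendsto x Filter.atTop (nhds xstar) :=
  stmt_10_general f hbot htop hlsc hconv d hd1 lam hlam β hβpos hβmono hβtop x y hy E hE hE0 xstar
    hxs_min hxs_norm
end

section
/- With the setting of the proximal algorithm x_{k+1} = prox_{β_k f}(d x_k), d ∈ (0,1), φ_k = f + ((1−d)/(2β_k))‖·‖², y_k = argmin φ_k, λ > 0, and E_k = β_k(φ_k(x_k) − φ_k(y_k)) + (λ/2)‖x_k − y_{k−1}‖², one has for all k: f(x_k) − min f ≤ E_k/β_k + ((1−d)/(2β_k))‖x*‖² and ‖x_k − y_k‖² ≤ 2E_k/(1−d), where x* is the minimum norm minimizer of f. -/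
/-!
With `c = (1 - d) / (2 β_k)`, the function `φ_k = f + c‖·‖²` is strongly convex, so it grows
quadratically away from its minimizer: `c‖x - y_k‖² ≤ φ_k x - φ_k y_k`. This follows by comparing
`φ_k y_k` with `φ_k` on the segment from `y_k` to `x`, using convexity of `f` and expanding the
square, and letting the point on the segment tend to `y_k`. Multiplying by `β_k` gives the second
bound, since `β_k c = (1 - d) / 2`. The first bound follows from `φ_k y_k ≤ φ_k x*` and
`β_k (φ_k x_k - φ_k y_k) ≤ E_k`.
-/

open Filter Topology Set

theorem nonneg_of_forall_mul_add_sq_nonneg {s q : ℝ}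
    (h : ∀ t : ℝ, 0 < t → t ≤ 1 → 0 ≤ t * s + t ^ 2 * q) : 0 ≤ s := by
  have hlim : Tendsto (fun t : ℝ ↦ s + t * q) (𝓝[>] 0) (𝓝 s) := by
    have hcont : Continuous (fun t : ℝ ↦ s + t * q) := by fun_prop
    exact (hcont.tendsto' 0 s (by simp)).mono_left nhdsWithin_le_nhds
  refine ge_of_tendsto hlim ?_
  filter_upwards [Ioc_mem_nhdsGT one_pos] with t ⟨ht0, ht1⟩
  refine nonneg_of_mul_nonneg_right ?_ ht0
  linarith [h t ht0 ht1]

section IsMinOnAddSq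

variable {H : Type*} [SeminormedAddCommGroup H] {f : H → EReal} {c : ℝ} {y : H}

theorem mul_sq_norm_sub_le_of_isMinOn_add_sq [InnerProductSpace ℝ H]
    (hconv : ∀ x y : H, ∀ a b : ℝ, 0 ≤ a → 0 ≤ b → a + b = 1 →
      f (a • x + b • y) ≤ (a : EReal) * f x + (b : EReal) * f y)
    (hy : IsMinOn (fun z ↦ f z + ((c * ‖z‖ ^ 2 : ℝ) : EReal)) univ y)
    {x : H} {a b : ℝ} (ha : f x = a) (hb : f y = b) :
    c * ‖x - y‖ ^ 2 ≤ (a + c * ‖x‖ ^ 2) - (b + c * ‖y‖ ^ 2) := by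
  set w := x - y
  have hslope : ∀ t : ℝ, 0 < t → t ≤ 1 →
      0 ≤ t * (a - b + 2 * c * inner ℝ y w) + t ^ 2 * (c * ‖w‖ ^ 2) := by
    intro t ht0 ht1
    have hseg : f (y + t • w) ≤ ((t * a + (1 - t) * b : ℝ) : EReal) := by
      have := hconv x y t (1 - t) ht0.le (by linarith) (by ring)
      rwa [ha, hb, show t • x + (1 - t) • y = y + t • w by module] at this
    have hmin := (isMinOn_univ_iff.mp hy (y + t • w)).trans (add_le_add_left hseg _)
    rw [hb] at hmin
    have hreal : b + c * ‖y‖ ^ 2 ≤ t * a + (1 - t) * b + c * ‖y + t • w‖ ^ 2 := by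
      exact_mod_cast hmin
    rw [norm_add_sq_real, inner_smul_right, norm_smul, Real.norm_eq_abs, abs_of_pos ht0] at hreal
    nlinarith
  have hs := nonneg_of_forall_mul_add_sq_nonneg hslope
  have hx : ‖x‖ ^ 2 = ‖y‖ ^ 2 + 2 * inner ℝ y w + ‖w‖ ^ 2 := by
    rw [← norm_add_sq_real, add_sub_cancel]
  rw [hx]
  linarith

theorem exists_coe_eq_of_isMinOn_add_sq (htop : ∃ x, f x ≠ ⊤)
    (hy : IsMinOn (fun z ↦ f z + ((c * ‖z‖ ^ 2 : ℝ) : EReal)) univ y) (hybot : f y ≠ ⊥) :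
    ∃ b : ℝ, f y = b := by
  obtain ⟨z, hz⟩ := htop
  refine ⟨(f y).toReal, (EReal.coe_toReal (fun hyz ↦ ?_) hybot).symm⟩
  have := isMinOn_univ_iff.mp hy z
  rw [hyz, EReal.top_add_coe, top_le_iff] at this
  exact EReal.add_ne_top hz (EReal.coe_ne_top _) this

theorem sub_le_of_isMinOn_add_sq (hc : 0 ≤ c)
    (hy : IsMinOn (fun z ↦ f z + ((c * ‖z‖ ^ 2 : ℝ) : EReal)) univ y)
    {x : H} {a b : ℝ} (ha : f x = a) (hb : f y = b) {z : H} (hzbot : f z ≠ ⊥) :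
    f x - f z ≤ (((a + c * ‖x‖ ^ 2) - (b + c * ‖y‖ ^ 2) + c * ‖z‖ ^ 2 : ℝ) : EReal) := by
  rcases eq_or_ne (f z) ⊤ with hz | hz
  · simp [hz, EReal.sub_top]
  obtain ⟨m, hm⟩ : ∃ m : ℝ, f z = m := ⟨_, (EReal.coe_toReal hz hzbot).symm⟩
  have hmin : b + c * ‖y‖ ^ 2 ≤ m + c * ‖z‖ ^ 2 := by
    have := isMinOn_univ_iff.mp hy z
    rw [hb, hm] at this
    exact_mod_cast this
  rw [ha, hm]
  norm_cast
  linarith [mul_nonneg hc (sq_nonneg ‖x‖)]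

end IsMinOnAddSq

theorem stmt_11_general {H : Type*} [NormedAddCommGroup H] [InnerProductSpace ℝ H]
    (f : H → EReal)
    (hbot : ∀ x, f x ≠ ⊥) (htop : ∃ x, f x ≠ ⊤)
    (hconv : ∀ x y : H, ∀ a b : ℝ, 0 ≤ a → 0 ≤ b → a + b = 1 →
      f (a • x + b • y) ≤ (a : EReal) * f x + (b : EReal) * f y)
    (d : ℝ) (hd1 : d < 1)
    (lam : ℝ) (hlam : 0 < lam)
    (β : ℕ → ℝ) (hβpos : ∀ k, 0 < β k)
    (x y : ℕ → H)
    (hy : ∀ k, ∀ z : H,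
      f (y k) + (((1 - d) / (2 * β k) * ‖y k‖ ^ 2 : ℝ) : EReal)
        ≤ f z + (((1 - d) / (2 * β k) * ‖z‖ ^ 2 : ℝ) : EReal))
    (E : ℕ → EReal)
    (hE : ∀ k, E k
      = (β k : EReal) *
          ((f (x k) + (((1 - d) / (2 * β k) * ‖x k‖ ^ 2 : ℝ) : EReal))
            - (f (y k) + (((1 - d) / (2 * β k) * ‖y k‖ ^ 2 : ℝ) : EReal)))
        + ((lam / 2 * ‖x k - y (k - 1)‖ ^ 2 : ℝ) : EReal))
    (xstar : H) :
    ∀ k, f (x k) - f xstar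
          ≤ E k / (β k : EReal) + (((1 - d) / (2 * β k) * ‖xstar‖ ^ 2 : ℝ) : EReal)
      ∧ ((‖x k - y k‖ ^ 2 : ℝ) : EReal) ≤ ((2 / (1 - d) : ℝ) : EReal) * E k := by
  intro k
  set c := (1 - d) / (2 * β k)
  have hβ := hβpos k
  have hd : 0 < 1 - d := by linarith
  have hc : 0 < c := by positivity
  have hmin : IsMinOn (fun z ↦ f z + ((c * ‖z‖ ^ 2 : ℝ) : EReal)) univ (y k) :=
    isMinOn_univ_iff.mpr (hy k)
  obtain ⟨b, hb⟩ := exists_coe_eq_of_isMinOn_add_sq htop hmin (hbot (y k))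
  rcases eq_or_ne (f (x k)) ⊤ with hxk | hxk
  · have hEk : E k = ⊤ := by
      rw [hE k, hxk, hb, EReal.top_add_coe, ← EReal.coe_add, EReal.top_sub_coe,
        EReal.coe_mul_top_of_pos hβ, EReal.top_add_coe]
    rw [hEk, EReal.top_div_of_pos_ne_top (by exact_mod_cast hβ) (EReal.coe_ne_top _),
      EReal.top_add_coe, EReal.coe_mul_top_of_pos (by positivity)]
    exact ⟨le_top, le_top⟩
  have ha := (EReal.coe_toReal hxk (hbot (x k))).symm
  set L := lam / 2 * ‖x k - y (k - 1)‖ ^ 2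
  set gap := ((f (x k)).toReal + c * ‖x k‖ ^ 2) - (b + c * ‖y k‖ ^ 2)
  have hEk : E k = ((β k * gap + L : ℝ) : EReal) := by
    rw [hE k, ha, hb]; norm_cast
  have hL : 0 ≤ L := by positivity
  rw [hEk]
  constructor
  · refine (sub_le_of_isMinOn_add_sq hc.le hmin ha hb (hbot xstar)).trans ?_
    rw [← EReal.coe_div]
    norm_cast
    rw [add_div, mul_div_cancel_left₀ _ hβ.ne']
    linarith [div_nonneg hL hβ.le]
  · have hβc : β k * c = (1 - d) / 2 := by simp only [c]; field_simp
    have hgrowth := mul_sq_norm_sub_le_of_isMinOn_add_sq hconv hmin ha hb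
    norm_cast
    calc ‖x k - y k‖ ^ 2 = 2 / (1 - d) * (β k * (c * ‖x k - y k‖ ^ 2)) := by
          rw [← mul_assoc (β k), hβc]; field_simp
      _ ≤ 2 / (1 - d) * (β k * gap + L) := by
          gcongr; linarith [mul_le_mul_of_nonneg_left hgrowth hβ.le]

/-- For the proximal algorithm `x_{k+1} = prox_{β_k f}(d x_k)`,
with `φ_k = f + ((1−d)/(2β_k))‖·‖²`, `y_k = argmin φ_k`,
`E_k = β_k(φ_k(x_k) − φ_k(y_k)) + (λ/2)‖x_k − y_{k−1}‖²`, and `x*` the minimum norm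
minimizer of `f`, one has for all `k`:
`f(x_k) − min f ≤ E_k/β_k + ((1−d)/(2β_k))‖x*‖²` and `‖x_k − y_k‖² ≤ 2E_k/(1−d)`. -/
theorem stmt_11 {H : Type*} [NormedAddCommGroup H] [InnerProductSpace ℝ H] [CompleteSpace H]
    (f : H → EReal)
    (hbot : ∀ x, f x ≠ ⊥) (htop : ∃ x, f x ≠ ⊤)
    (hlsc : LowerSemicontinuous f)
    (hconv : ∀ x y : H, ∀ a b : ℝ, 0 ≤ a → 0 ≤ b → a + b = 1 →
      f (a • x + b • y) ≤ (a : EReal) * f x + (b : EReal) * f y)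
    (d : ℝ) (hd0 : 0 < d) (hd1 : d < 1)
    (lam : ℝ) (hlam : 0 < lam)
    (β : ℕ → ℝ) (hβpos : ∀ k, 0 < β k)
    (x y : ℕ → H)
    (hstep : ∀ k, ∀ z : H,
      f (x (k + 1)) + ((‖d • x k - x (k + 1)‖ ^ 2 / (2 * β k) : ℝ) : EReal)
        ≤ f z + ((‖d • x k - z‖ ^ 2 / (2 * β k) : ℝ) : EReal))
    (hy : ∀ k, ∀ z : H,
      f (y k) + (((1 - d) / (2 * β k) * ‖y k‖ ^ 2 : ℝ) : EReal)
        ≤ f z + (((1 - d) / (2 * β k) * ‖z‖ ^ 2 : ℝ) : EReal))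
    (E : ℕ → EReal)
    (hE : ∀ k, E k
      = (β k : EReal) *
          ((f (x k) + (((1 - d) / (2 * β k) * ‖x k‖ ^ 2 : ℝ) : EReal))
            - (f (y k) + (((1 - d) / (2 * β k) * ‖y k‖ ^ 2 : ℝ) : EReal)))
        + ((lam / 2 * ‖x k - y (k - 1)‖ ^ 2 : ℝ) : EReal))
    (xstar : H)
    (hxs_min : ∀ z, f xstar ≤ f z)
    (hxs_norm : ∀ z : H, (∀ w, f z ≤ f w) → ‖xstar‖ ≤ ‖z‖) :
    ∀ k, f (x k) - f xstar
          ≤ E k / (β k : EReal) + (((1 - d) / (2 * β k) * ‖xstar‖ ^ 2 : ℝ) : EReal)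
      ∧ ((‖x k - y k‖ ^ 2 : ℝ) : EReal) ≤ ((2 / (1 - d) : ℝ) : EReal) * E k :=
  stmt_11_general f hbot htop hconv d hd1 lam hlam β hβpos x y hy E hE xstar
end

section
/- Let f : H → ℝ ∪ {+∞} be proper lsc convex, d ∈ (0,1), β > 0, φ(x) = f(x) + ((1−d)/(2β))‖x‖², and let x⁺ = prox_{β f}(d x) for given x ∈ H (equivalently x⁺ + β ∂f(x⁺) ∋ d x, i.e. −(d/β)(x⁺ − x) ∈ ∂φ(x⁺)). Then β(φ(x⁺) − φ(x)) ≤ −((1+d)/2)‖x⁺ − x‖². -/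
/-!
Since `x⁺` minimises `f + ‖d x - ·‖² / (2β)`, comparing it with the points `x⁺ + t (x - x⁺)` of the
segment towards `x`, using convexity of `f` and letting `t → 0⁺`, gives the prox inequality
`⟪d x - x⁺, x - x⁺⟫ ≤ β (f x - f x⁺)`. Adding `(1 - d)/2 (‖x⁺‖² - ‖x‖²)` to both sides, the right-hand
side becomes `-((1 + d)/2) ‖x⁺ - x‖²` identically in `x`, `x⁺`.
-/

open Filter Topology

lemma le_of_forall_le_add_mul {A B C : ℝ} (h : ∀ t : ℝ, 0 < t → t < 1 → A ≤ B + t * C) :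
    A ≤ B := by
  have hlim : Tendsto (fun t : ℝ => B + t * C) (𝓝[>] 0) (𝓝 B) := by
    have : Continuous fun t : ℝ => B + t * C := by fun_prop
    simpa using this.continuousWithinAt.tendsto (x := 0) (s := Set.Ioi 0)
  refine ge_of_tendsto hlim ?_
  filter_upwards [Ioo_mem_nhdsGT one_pos] with t ht using h t ht.1 ht.2

section

variable {E : Type*} [NormedAddCommGroup E] [InnerProductSpace ℝ E]

lemma inner_sub_le_mul_sub_of_prox {f : E → EReal}
    (hconv : ∀ x y : E, ∀ a b : ℝ, 0 ≤ a → 0 ≤ b → a + b = 1 →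
      f (a • x + b • y) ≤ (a : EReal) * f x + (b : EReal) * f y)
    {β : ℝ} (hβ : 0 < β) {c a y : E} {r s : ℝ} (ha : f a = r) (hy : f y = s)
    (hmin : ∀ z : E, f a + ((‖c - a‖ ^ 2 / (2 * β) : ℝ) : EReal)
        ≤ f z + ((‖c - z‖ ^ 2 / (2 * β) : ℝ) : EReal)) :
    inner ℝ (c - a) (y - a) ≤ β * (s - r) := by
  refine le_of_forall_le_add_mul (C := ‖y - a‖ ^ 2 / 2) fun t ht0 ht1 => ?_
  have hz : (1 - t) • a + t • y = a + t • (y - a) := by module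
  have hconv_t := hconv a y (1 - t) t (by linarith) ht0.le (by ring)
  have hmin_t := hmin ((1 - t) • a + t • y)
  rw [ha, hy] at hconv_t
  rw [ha] at hmin_t
  have hreal : r + ‖c - a‖ ^ 2 / (2 * β)
      ≤ (1 - t) * r + t * s + ‖(c - a) - t • (y - a)‖ ^ 2 / (2 * β) := by
    have := hmin_t.trans (add_le_add_left hconv_t _)
    rw [hz, sub_add_eq_sub_sub] at this
    exact_mod_cast this
  rw [norm_sub_sq_real (c - a), norm_smul, inner_smul_right, Real.norm_eq_abs,
    abs_of_pos ht0] at hreal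
  rw [← sub_nonneg] at hreal ⊢
  refine (mul_nonneg_iff_of_pos_left ht0).mp ?_
  convert mul_nonneg hreal hβ.le using 1
  field_simp
  ring

end

theorem stmt_12_general {H : Type*} [NormedAddCommGroup H] [InnerProductSpace ℝ H]
    (f : H → EReal)
    (hbot : ∀ x, f x ≠ ⊥)
    (hconv : ∀ x y : H, ∀ a b : ℝ, 0 ≤ a → 0 ≤ b → a + b = 1 →
      f (a • x + b • y) ≤ (a : EReal) * f x + (b : EReal) * f y)
    (d : ℝ)
    (β : ℝ) (hβ : 0 < β)
    (x xp : H)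
    -- `x⁺ = prox_{β f}(d x)` : x⁺ minimizes `ξ ↦ f ξ + ‖d x − ξ‖²/(2β)`
    (hxp : ∀ z : H, f xp + ((‖d • x - xp‖ ^ 2 / (2 * β) : ℝ) : EReal)
        ≤ f z + ((‖d • x - z‖ ^ 2 / (2 * β) : ℝ) : EReal)) :
    (β : EReal) *
        ((f xp + (((1 - d) / (2 * β) * ‖xp‖ ^ 2 : ℝ) : EReal))
          - (f x + (((1 - d) / (2 * β) * ‖x‖ ^ 2 : ℝ) : EReal)))
      ≤ ((-((1 + d) / 2) * ‖xp - x‖ ^ 2 : ℝ) : EReal) := by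
  by_cases hx_top : f x = ⊤
  · rw [hx_top, EReal.top_add_of_ne_bot (EReal.coe_ne_bot _), EReal.sub_top,
      EReal.coe_mul_bot_of_pos hβ]
    exact bot_le
  have hxp_top : f xp ≠ ⊤ := by
    intro h
    have := hxp x
    rw [h, EReal.top_add_of_ne_bot (EReal.coe_ne_bot _)] at this
    exact (EReal.add_lt_top hx_top (EReal.coe_ne_top _)).not_ge this
  obtain ⟨s, hs⟩ : ∃ s : ℝ, f x = s := ⟨_, (EReal.coe_toReal hx_top (hbot x)).symm⟩
  obtain ⟨r, hr⟩ : ∃ r : ℝ, f xp = r := ⟨_, (EReal.coe_toReal hxp_top (hbot xp)).symm⟩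
  have hprox := inner_sub_le_mul_sub_of_prox hconv hβ hr hs hxp
  have hid : -inner ℝ (d • x - xp) (x - xp) + (1 - d) / 2 * (‖xp‖ ^ 2 - ‖x‖ ^ 2)
      = -((1 + d) / 2) * ‖xp - x‖ ^ 2 := by
    simp only [← real_inner_self_eq_norm_sq, inner_sub_left, inner_sub_right,
      real_inner_smul_left, real_inner_comm xp x]
    ring
  rw [hr, hs, ← hid]
  norm_cast
  have hβ_mul : β * ((1 - d) / (2 * β)) = (1 - d) / 2 := by field_simp
  linear_combination hprox + (‖xp‖ ^ 2 - ‖x‖ ^ 2) * hβ_mul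

/-- With `φ = f + ((1−d)/(2β))‖·‖²` and `x⁺ = prox_{β f}(d x)`,
one has `β(φ(x⁺) − φ(x)) ≤ −((1+d)/2)‖x⁺ − x‖²`. -/
theorem stmt_12 {H : Type*} [NormedAddCommGroup H] [InnerProductSpace ℝ H] [CompleteSpace H]
    (f : H → EReal)
    (hbot : ∀ x, f x ≠ ⊥) (htop : ∃ x, f x ≠ ⊤)
    (hlsc : LowerSemicontinuous f)
    (hconv : ∀ x y : H, ∀ a b : ℝ, 0 ≤ a → 0 ≤ b → a + b = 1 →
      f (a • x + b • y) ≤ (a : EReal) * f x + (b : EReal) * f y)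
    (d : ℝ) (hd0 : 0 < d) (hd1 : d < 1)
    (β : ℝ) (hβ : 0 < β)
    (x xp : H)
    -- `x⁺ = prox_{β f}(d x)` : x⁺ minimizes `ξ ↦ f ξ + ‖d x − ξ‖²/(2β)`
    (hxp : ∀ z : H, f xp + ((‖d • x - xp‖ ^ 2 / (2 * β) : ℝ) : EReal)
        ≤ f z + ((‖d • x - z‖ ^ 2 / (2 * β) : ℝ) : EReal)) :
    (β : EReal) *
        ((f xp + (((1 - d) / (2 * β) * ‖xp‖ ^ 2 : ℝ) : EReal))
          - (f x + (((1 - d) / (2 * β) * ‖x‖ ^ 2 : ℝ) : EReal)))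
      ≤ ((-((1 + d) / 2) * ‖xp - x‖ ^ 2 : ℝ) : EReal) :=
  stmt_12_general f hbot hconv d β hβ x xp hxp
end
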